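/- Let G be a finite simple graph, let H be an induced subgraph of G, and let n ≥ 1. If I(G)^n is bridge-friendly, then I(H)^n is bridge-friendly. -/

import Mathlib

open scoped Classical

noncomputable section

namespace ChauHaMaithani

variable {V : Type*}

/-- The lcm of a finite set of monomials (exponent vectors): pointwise maximum. -/
def mlcm (σ : Finset (V → ℕ)) : V → ℕ := fun v => σ.sup fun g => g v

/-- `m` is a bridge of `σ`: `m ∈ σ` and dropping `m` does not change the lcm. -/
def IsBridge (σ : Finset (V → ℕ)) (m : V → ℕ) : Prop :=
  m ∈ σ ∧ mlcm (σ.erase m) = mlcm σ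

/-- `m` is a gap of `σ`: `m ∉ σ` and adding `m` does not change the lcm. -/
def IsGap (σ : Finset (V → ℕ)) (m : V → ℕ) : Prop :=
  m ∉ σ ∧ mlcm (insert m σ) = mlcm σ

/-- A total order `≻` on monomials is encoded by a ranking function `ord`:
`m ≻ m'` iff `ord m' < ord m` (injectivity on the generating set is assumed separately).
`m` is a true gap of `σ` if it is a gap and every bridge of `σ ∪ {m}` dominated by `m`
is already a bridge of `σ`. -/
def IsTrueGap (ord : (V → ℕ) → ℕ) (σ : Finset (V → ℕ)) (m : V → ℕ) : Prop :=
  IsGap σ m ∧ ∀ m', IsBridge (insert m σ) m' → ord m' < ord m → IsBridge σ m'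

/-- `σ` is type-1: it has a true gap (in `M`) dominating none of its bridges. -/
def Type1 (M : Finset (V → ℕ)) (ord : (V → ℕ) → ℕ) (σ : Finset (V → ℕ)) : Prop :=
  ∃ m ∈ M, IsTrueGap ord σ m ∧ ∀ b, IsBridge σ b → ¬ ord b < ord m

/-- `σ` is potentially-type-2: it has a bridge dominating none of its true gaps. -/
def PotType2 (M : Finset (V → ℕ)) (ord : (V → ℕ) → ℕ) (σ : Finset (V → ℕ)) : Prop :=
  ∃ b, IsBridge σ b ∧ ∀ m ∈ M, IsTrueGap ord σ m → ¬ ord m < ord b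

/-- `b` is the `≻`-smallest bridge of `σ`. -/
def IsSBridge (ord : (V → ℕ) → ℕ) (σ : Finset (V → ℕ)) (b : V → ℕ) : Prop :=
  IsBridge σ b ∧ ∀ b', IsBridge σ b' → ord b ≤ ord b'

/-- `σ` is type-2. -/
def Type2 (M : Finset (V → ℕ)) (ord : (V → ℕ) → ℕ) (σ : Finset (V → ℕ)) : Prop :=
  PotType2 M ord σ ∧
    ∀ σ' : Finset (V → ℕ), σ' ⊆ M → σ' ≠ σ → PotType2 M ord σ' →
      ∀ b b', IsSBridge ord σ b → IsSBridge ord σ' b' →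
        σ'.erase b' = σ.erase b → ord b < ord b'

/-- `M` (the minimal generating set of a monomial ideal) is bridge-friendly w.r.t. `ord`:
every potentially-type-2 subset is type-2. -/
def BridgeFriendlyWrt (M : Finset (V → ℕ)) (ord : (V → ℕ) → ℕ) : Prop :=
  ∀ σ ⊆ M, PotType2 M ord σ → Type2 M ord σ

/-- `M` is bridge-friendly: bridge-friendly w.r.t. some total order on `M`. -/
def BridgeFriendly (M : Finset (V → ℕ)) : Prop :=
  ∃ ord : (V → ℕ) → ℕ, Set.InjOn ord M ∧ BridgeFriendlyWrt M ord

/-- `σ = {m_1 ≻ ⋯ ≻ m_k} ⊆ M` is Lyubeznik-critical w.r.t. `ord`: there is no `m ∈ M` with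
`m_t ≻ m` and `m ∣ lcm(m_1, …, m_t)` for some `1 < t ≤ k`. -/
def LyubCritical (M : Finset (V → ℕ)) (ord : (V → ℕ) → ℕ) (σ : Finset (V → ℕ)) : Prop :=
  σ ⊆ M ∧ ¬ ∃ m ∈ M, ∃ t ∈ σ, (∃ u ∈ σ, ord t < ord u) ∧ ord m < ord t ∧
      ∀ v, m v ≤ mlcm (σ.filter fun g => ord t ≤ ord g) v

/-- `M` is Lyubeznik: for some total order on `M`, no Lyubeznik-critical subset has a
bridge (equivalently, the associated Lyubeznik resolution is minimal). -/
def IsLyubeznik (M : Finset (V → ℕ)) : Prop :=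
  ∃ ord : (V → ℕ) → ℕ, Set.InjOn ord M ∧
    ∀ σ : Finset (V → ℕ), LyubCritical M ord σ → ∀ b, ¬ IsBridge σ b

/-- The quadratic monomial `xy` attached to an edge `e = {x,y}`. -/
def edgeMon (e : Sym2 V) : V → ℕ := fun v => if v ∈ e then 1 else 0

/-- `mingens(I(G))`: the edge monomials of `G`. -/
def edgeGens [Fintype V] (G : SimpleGraph V) : Finset (V → ℕ) :=
  (Finset.univ.filter fun e : Sym2 V => e ∈ G.edgeSet).image edgeMon

/-- `mingens(I(G)^n)`: the monomials that are products of `n` edges of `G`. -/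
def edgePowGens [Fintype V] (G : SimpleGraph V) (n : ℕ) : Finset (V → ℕ) :=
  (Finset.univ.filter fun f : Fin n → Sym2 V => ∀ i, f i ∈ G.edgeSet).image
    fun f => ∑ i, edgeMon (f i)

/-- A graph is chordal if it contains no induced cycle of length at least 4. -/
def Chordal (G : SimpleGraph V) : Prop :=
  ∀ n, 4 ≤ n → IsEmpty (SimpleGraph.cycleGraph n ↪g G)


/-- Vertex type of the graph `L(a,b,c)`: `Sum.inl 0` is `x`, `Sum.inl 1` is `y`,
and the remaining summands are the leaves `x_i`, the leaves `y_j`, and the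
triangle tips `z_k`. -/
abbrev LV (a b c : ℕ) := Fin 2 ⊕ (Fin a ⊕ Fin b ⊕ Fin c)

/-- The graph `L(a,b,c)`: `c` triangles glued along the common edge `{x,y}`, with
`a` leaves attached to `x` and `b` leaves attached to `y`. -/
def LGraph (a b c : ℕ) : SimpleGraph (LV a b c) :=
  SimpleGraph.fromRel fun u v =>
    (u = Sum.inl 0 ∧ v = Sum.inl 1) ∨
    (∃ i, u = Sum.inl 0 ∧ v = Sum.inr (Sum.inl i)) ∨
    (∃ j, u = Sum.inl 1 ∧ v = Sum.inr (Sum.inr (Sum.inl j))) ∨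
    (∃ k, (u = Sum.inl 0 ∨ u = Sum.inl 1) ∧ v = Sum.inr (Sum.inr (Sum.inr k)))

/-- The graph `BF(T,w)`: attach `w(e)` new triangles along each edge `e` of `T`. -/
def BFGraph {VT : Type} (T : SimpleGraph VT) (w : T.edgeSet → ℕ) :
    SimpleGraph (VT ⊕ (Σ e : T.edgeSet, Fin (w e))) :=
  SimpleGraph.fromRel fun u v =>
    (∃ a b, u = Sum.inl a ∧ v = Sum.inl b ∧ T.Adj a b) ∨
    (∃ (a : VT) (e : T.edgeSet) (i : Fin (w e)), u = Sum.inl a ∧ v = Sum.inr ⟨e, i⟩ ∧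
      a ∈ (e : Sym2 VT))

/-- The kite graph: the diamond (`K₄` minus the edge `{2,3}`) together with a pendant
vertex `4` attached to the degree-two vertex `2`. -/
def kite : SimpleGraph (Fin 5) :=
  SimpleGraph.fromEdgeSet {s(0,1), s(0,2), s(0,3), s(1,2), s(1,3), s(2,4)}

/-- The gem graph: the path `0-1-2-3` together with a vertex `4` adjacent to all of
`0,1,2,3`. -/
def gem : SimpleGraph (Fin 5) :=
  SimpleGraph.fromEdgeSet {s(0,1), s(1,2), s(2,3), s(0,4), s(1,4), s(2,4), s(3,4)}

/-- The tadpole graph: the triangle `0,1,2` with a path `0-3-4` of length 2 attached. -/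
def tadpole : SimpleGraph (Fin 5) :=
  SimpleGraph.fromEdgeSet {s(0,1), s(1,2), s(0,2), s(0,3), s(3,4)}

/-- The butterfly graph: two triangles `0,1,2` and `0,3,4` sharing the vertex `0`. -/
def butterfly : SimpleGraph (Fin 5) :=
  SimpleGraph.fromEdgeSet {s(0,1), s(1,2), s(0,2), s(0,3), s(3,4), s(0,4)}

/-- The net graph: the triangle `0,1,2` with pendant vertices `3,4,5` attached to
`0,1,2` respectively. -/
def net : SimpleGraph (Fin 6) :=
  SimpleGraph.fromEdgeSet {s(0,1), s(1,2), s(0,2), s(0,3), s(1,4), s(2,5)}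


/-!
Extending exponent vectors by zero along the vertex embedding `W → V` is injective and
commutes with lcm, so it carries the bridges, gaps, true gaps and smallest bridges of subsets of
`mingens(I(H)^n)` to those of their images, for the order pulled back from `G`. Because `H` is
induced, the generators of `I(G)^n` supported on `V(H)` are exactly the images of the generators
of `I(H)^n`; a gap of an image divides its lcm, so it is supported on `V(H)` as well. Hence
`I(G)^n` sees no true gaps of these images beyond the images of those seen in `I(H)^n`, and the
type-2 condition transfers.
-/

open Function

variable {W : Type*}

lemma mlcm_mono {σ τ : Finset (V → ℕ)} (h : σ ⊆ τ) : mlcm σ ≤ mlcm τ :=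
  fun _ => Finset.sup_mono h

lemma IsGap.le_mlcm {σ : Finset (V → ℕ)} {m : V → ℕ} (h : IsGap σ m) : m ≤ mlcm σ := by
  intro v
  have hv := congrFun h.2 v
  simp only [mlcm, Finset.sup_insert] at hv
  exact le_of_sup_eq hv

section Restriction

variable {M N : Finset (V → ℕ)} {ord : (V → ℕ) → ℕ}

lemma PotType2.of_subset (hclosed : ∀ m ∈ N, m ≤ mlcm M → m ∈ M)
    {σ : Finset (V → ℕ)} (hσ : σ ⊆ M) (h : PotType2 M ord σ) : PotType2 N ord σ := by
  obtain ⟨b, hb, hgaps⟩ := h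
  refine ⟨b, hb, fun m hm hgap => hgaps m (hclosed m hm ?_) hgap⟩
  exact hgap.1.le_mlcm.trans (mlcm_mono hσ)

lemma BridgeFriendlyWrt.of_subset (hMN : M ⊆ N) (hclosed : ∀ m ∈ N, m ≤ mlcm M → m ∈ M)
    (h : BridgeFriendlyWrt N ord) : BridgeFriendlyWrt M ord := by
  intro σ hσ hpot
  refine ⟨hpot, fun σ' hσ' hne hpot' => ?_⟩
  exact (h σ (hσ.trans hMN) (hpot.of_subset hclosed hσ)).2 σ' (hσ'.trans hMN) hne
    (hpot'.of_subset hclosed hσ')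

end Restriction

section Relabel

variable {φ : (W → ℕ) → (V → ℕ)} {ord : (V → ℕ) → ℕ} {σ : Finset (W → ℕ)}

lemma isBridge_image_iff (hφ : Injective φ) (hlcm : ∀ τ, mlcm (τ.image φ) = φ (mlcm τ))
    {m : W → ℕ} : IsBridge (σ.image φ) (φ m) ↔ IsBridge σ m := by
  rw [IsBridge, IsBridge, ← Finset.image_erase hφ, hlcm, hlcm, hφ.eq_iff,
    hφ.mem_finset_image]

lemma isGap_image_iff (hφ : Injective φ) (hlcm : ∀ τ, mlcm (τ.image φ) = φ (mlcm τ))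
    {m : W → ℕ} : IsGap (σ.image φ) (φ m) ↔ IsGap σ m := by
  rw [IsGap, IsGap, ← Finset.image_insert, hlcm, hlcm, hφ.eq_iff,
    hφ.mem_finset_image]

lemma isTrueGap_image_iff (hφ : Injective φ) (hlcm : ∀ τ, mlcm (τ.image φ) = φ (mlcm τ))
    {m : W → ℕ} : IsTrueGap ord (σ.image φ) (φ m) ↔ IsTrueGap (ord ∘ φ) σ m := by
  rw [IsTrueGap, IsTrueGap, isGap_image_iff hφ hlcm, ← Finset.image_insert]
  refine and_congr_right fun _ => ⟨fun h b hb hlt => ?_, fun h b hb hlt => ?_⟩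
  · exact (isBridge_image_iff hφ hlcm).1 (h _ ((isBridge_image_iff hφ hlcm).2 hb) hlt)
  · obtain ⟨c, -, rfl⟩ := Finset.mem_image.1 hb.1
    rw [isBridge_image_iff hφ hlcm] at hb ⊢
    exact h c hb hlt

lemma IsSBridge.image (hφ : Injective φ) (hlcm : ∀ τ, mlcm (τ.image φ) = φ (mlcm τ))
    {b : W → ℕ} (h : IsSBridge (ord ∘ φ) σ b) : IsSBridge ord (σ.image φ) (φ b) := by
  refine ⟨(isBridge_image_iff hφ hlcm).2 h.1, fun b' hb' => ?_⟩
  obtain ⟨c, -, rfl⟩ := Finset.mem_image.1 hb'.1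
  exact h.2 c ((isBridge_image_iff hφ hlcm).1 hb')

lemma PotType2.image (hφ : Injective φ) (hlcm : ∀ τ, mlcm (τ.image φ) = φ (mlcm τ))
    {M : Finset (W → ℕ)} (h : PotType2 M (ord ∘ φ) σ) :
    PotType2 (M.image φ) ord (σ.image φ) := by
  obtain ⟨b, hb, hgaps⟩ := h
  refine ⟨φ b, (isBridge_image_iff hφ hlcm).2 hb, fun _ hm hgap => ?_⟩
  obtain ⟨m, hmM, rfl⟩ := Finset.mem_image.1 hm
  exact hgaps m hmM ((isTrueGap_image_iff hφ hlcm).1 hgap)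

lemma BridgeFriendlyWrt.of_image (hφ : Injective φ)
    (hlcm : ∀ τ, mlcm (τ.image φ) = φ (mlcm τ)) {M : Finset (W → ℕ)}
    (h : BridgeFriendlyWrt (M.image φ) ord) : BridgeFriendlyWrt M (ord ∘ φ) := by
  intro σ hσ hpot
  refine ⟨hpot, fun σ' hσ' hne hpot' b b' hb hb' herase => ?_⟩
  refine (h _ (Finset.image_subset_image hσ) (hpot.image hφ hlcm)).2 _
    (Finset.image_subset_image hσ') ((Finset.image_injective hφ).ne hne)
    (hpot'.image hφ hlcm) _ _ (hb.image hφ hlcm) (hb'.image hφ hlcm) ?_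
  rw [← Finset.image_erase hφ, ← Finset.image_erase hφ, herase]

lemma BridgeFriendlyWrt.of_embedding (hφ : Injective φ)
    (hlcm : ∀ τ, mlcm (τ.image φ) = φ (mlcm τ)) {M : Finset (W → ℕ)} {N : Finset (V → ℕ)}
    (hmaps : ∀ m ∈ M, φ m ∈ N) (hclosed : ∀ m ∈ N, m ≤ φ (mlcm M) → ∃ m₀ ∈ M, φ m₀ = m)
    (h : BridgeFriendlyWrt N ord) : BridgeFriendlyWrt M (ord ∘ φ) := by
  refine (h.of_subset (Finset.image_subset_iff.2 hmaps) fun m hm hle => ?_).of_image hφ hlcm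
  rw [hlcm] at hle
  exact Finset.mem_image.2 (hclosed m hm hle)

end Relabel

section ExtendByZero

variable {f : W → V}

lemma mlcm_image_extendByZero (hf : Injective f) (σ : Finset (W → ℕ)) :
    mlcm (σ.image (ExtendByZero.hom ℕ f)) = ExtendByZero.hom ℕ f (mlcm σ) := by
  funext v
  simp only [mlcm, Finset.sup_image, ExtendByZero.hom_apply]
  by_cases hv : ∃ w, f w = v
  · obtain ⟨w, rfl⟩ := hv
    simp [comp_def, hf.extend_apply, mlcm]
  · simp [comp_def, extend_apply' _ _ _ hv]

lemma extendByZero_edgeMon (hf : Injective f) (e : Sym2 W) :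
    ExtendByZero.hom ℕ f (edgeMon e) = edgeMon (e.map f) := by
  funext v
  by_cases hv : ∃ w, f w = v
  · obtain ⟨w, rfl⟩ := hv
    simp [edgeMon, hf.extend_apply, Sym2.mem_map, hf.eq_iff]
  · have hve : v ∉ e.map f := fun h => hv (by
      obtain ⟨w, -, hw⟩ := Sym2.mem_map.1 h
      exact ⟨w, hw⟩)
    simp [edgeMon, extend_apply' _ _ _ hv, hve]

end ExtendByZero

lemma _root_.Sym2.exists_map_eq_of_forall_mem_range {f : W → V} {e : Sym2 V}
    (h : ∀ v ∈ e, v ∈ Set.range f) : ∃ e' : Sym2 W, e'.map f = e := by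
  induction e using Sym2.ind with
  | h x y =>
    obtain ⟨a, rfl⟩ := h x (Sym2.mem_mk_left x y)
    obtain ⟨b, rfl⟩ := h _ (Sym2.mem_mk_right _ y)
    exact ⟨s(a, b), rfl⟩

section InducedSubgraph

variable [Fintype V] [Fintype W] {G : SimpleGraph V} {H : SimpleGraph W} {n : ℕ}

lemma mem_edgePowGens {m : V → ℕ} :
    m ∈ edgePowGens G n ↔
      ∃ g : Fin n → Sym2 V, (∀ i, g i ∈ G.edgeSet) ∧ ∑ i, edgeMon (g i) = m := by
  simp [edgePowGens]

lemma extendByZero_mem_edgePowGens (f : H ↪g G) {m : W → ℕ} (hm : m ∈ edgePowGens H n) :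
    ExtendByZero.hom ℕ f m ∈ edgePowGens G n := by
  obtain ⟨g, hg, rfl⟩ := mem_edgePowGens.1 hm
  refine mem_edgePowGens.2 ⟨fun i => (g i).map f, fun i => f.map_mem_edgeSet_iff.2 (hg i), ?_⟩
  simp [map_sum, extendByZero_edgeMon f.injective]

/-- The hypothesis `hle` says that `m` is supported on the vertices of `H`. -/
lemma exists_extendByZero_eq_of_le (f : H ↪g G) {m : V → ℕ} (hm : m ∈ edgePowGens G n)
    {m' : W → ℕ} (hle : m ≤ ExtendByZero.hom ℕ f m') :
    ∃ m₀ ∈ edgePowGens H n, ExtendByZero.hom ℕ f m₀ = m := by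
  obtain ⟨g, hg, rfl⟩ := mem_edgePowGens.1 hm
  have hrange (i : Fin n) : ∀ v ∈ g i, v ∈ Set.range f := by
    intro v hv
    by_contra hvf
    have hle_v : edgeMon (g i) v ≤ ExtendByZero.hom ℕ f m' v :=
      (Finset.single_le_sum (fun _ _ => zero_le) (Finset.mem_univ i)).trans hle v
    simp [edgeMon, hv, extend_apply' _ _ _ hvf] at hle_v
  choose e he using fun i => Sym2.exists_map_eq_of_forall_mem_range (hrange i)
  refine ⟨∑ i, edgeMon (e i), mem_edgePowGens.2 ⟨e, fun i => ?_, rfl⟩, ?_⟩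
  · exact f.map_mem_edgeSet_iff.1 (he i ▸ hg i)
  · simp [map_sum, extendByZero_edgeMon f.injective, he]

end InducedSubgraph

theorem inducedSubgraph_bridgeFriendly_general {V W : Type} [Fintype V] [Fintype W]
    (G : SimpleGraph V) (H : SimpleGraph W) (f : H ↪g G) (n : ℕ)
    (h : BridgeFriendly (edgePowGens G n)) :
    BridgeFriendly (edgePowGens H n) := by
  obtain ⟨ord, hinj, hbf⟩ := h
  have hφ : Injective (ExtendByZero.hom ℕ f) := extend_injective f.injective 0
  have hmaps : ∀ m ∈ edgePowGens H n, ExtendByZero.hom ℕ f m ∈ edgePowGens G n :=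
    fun _ => extendByZero_mem_edgePowGens f
  refine ⟨ord ∘ ExtendByZero.hom ℕ f, hinj.comp hφ.injOn hmaps, ?_⟩
  exact hbf.of_embedding hφ (mlcm_image_extendByZero f.injective) hmaps
    fun _ hm => exists_extendByZero_eq_of_le f hm

/-- **Corollary 2.15.** If `H` is an induced subgraph of `G` and `I(G)^n` is
bridge-friendly, then so is `I(H)^n`. -/
theorem inducedSubgraph_bridgeFriendly {V W : Type} [Fintype V] [Fintype W]
    (G : SimpleGraph V) (H : SimpleGraph W) (f : H ↪g G) (n : ℕ) (hn : 1 ≤ n)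
    (h : BridgeFriendly (edgePowGens G n)) :
    BridgeFriendly (edgePowGens H n) :=
  inducedSubgraph_bridgeFriendly_general G H f n h

end ChauHaMaithani
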